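/- arXiv:2605.15931 — 2 statements merged into one kernel-verified Lean document; each statement's English description precedes it below -/
import Mathlib

section
/- Let W be a standard d-dimensional Brownian motion and Σ a d×d matrix such that (ΣΣ')_{k,k} > 0 for some k. For r > 0 let τ^r(ΣW) = inf{t : ‖ΣW_t‖ ≥ r} and τ^{r+}(ΣW) = lim_{u↓r} τ^u(ΣW). Then P(τ^r(ΣW) < τ^{r+}(ΣW)) = 0, i.e., almost surely the map s ↦ τ^s(ΣW) is continuous at s = r. -/
open Filter MeasureTheory ProbabilityTheory Matrix

noncomputable section

namespace Counterexample

variable {E : Type*} [NormedAddCommGroup E]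

/-- Local uniform (uniform on compacts) convergence of paths. -/
def LUTendsto (yn : ℕ → ℝ → E) (y : ℝ → E) : Prop :=
  ∀ N : ℕ, TendstoUniformlyOn (fun n t => yn n t) y Filter.atTop (Set.Icc 0 N)

/-- Càdlàg path: right-continuous with left limits. -/
def Cadlag (y : ℝ → E) : Prop :=
  (∀ t : ℝ, ContinuousWithinAt y (Set.Ici t) t) ∧
  (∀ t : ℝ, ∃ l, Filter.Tendsto y (nhdsWithin t (Set.Iio t)) (nhds l))

/-- Skorokhod (J1) convergence of paths on `[0,∞)` via time changes. -/
def SkTendsto (yn : ℕ → ℝ → E) (y : ℝ → E) : Prop :=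
  ∃ lam : ℕ → ℝ → ℝ,
    (∀ n, Monotone (lam n)) ∧ (∀ n, Continuous (lam n)) ∧
    (∀ n, Function.Bijective (lam n)) ∧ (∀ n, lam n 0 = 0) ∧
    LUTendsto lam id ∧ LUTendsto (fun n => yn n ∘ lam n) y

/-- Sequential continuity of a path functional at a point, in the Skorokhod sense. -/
def SkContinuousAt (φ : (ℝ → E) → ℝ) (y : ℝ → E) : Prop :=
  ∀ yn : ℕ → ℝ → E, (∀ n, Cadlag (yn n)) → SkTendsto yn y →
    Tendsto (fun n => φ (yn n)) atTop (nhds (φ y))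

/-- Sequential continuity of a path functional, in the local uniform sense. -/
def LUContinuousAt (φ : (ℝ → E) → ℝ) (y : ℝ → E) : Prop :=
  ∀ yn : ℕ → ℝ → E, (∀ n, Cadlag (yn n)) → LUTendsto yn y →
    Tendsto (fun n => φ (yn n)) atTop (nhds (φ y))

variable {Ω Ω' : Type*} [MeasurableSpace Ω] [MeasurableSpace Ω']

/-- Weak convergence of càdlàg processes in the Skorokhod topology. -/
def WeakConvSk (P : Measure Ω) (P' : Measure Ω')
    (Yn : ℕ → Ω → ℝ → E) (Y : Ω' → ℝ → E) : Prop :=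
  ∀ φ : (ℝ → E) → ℝ, (∃ C, ∀ y, |φ y| ≤ C) → (∀ y, Cadlag y → SkContinuousAt φ y) →
    Tendsto (fun n => ∫ ω, φ (Yn n ω) ∂P) atTop (nhds (∫ ω, φ (Y ω) ∂P'))

/-- Weak convergence of càdlàg processes in the local uniform topology. -/
def WeakConvLU (P : Measure Ω) (P' : Measure Ω')
    (Yn : ℕ → Ω → ℝ → E) (Y : Ω' → ℝ → E) : Prop :=
  ∀ φ : (ℝ → E) → ℝ, (∃ C, ∀ y, |φ y| ≤ C) → (∀ y, Cadlag y → LUContinuousAt φ y) →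
    Tendsto (fun n => ∫ ω, φ (Yn n ω) ∂P) atTop (nhds (∫ ω, φ (Y ω) ∂P'))

/-- Convergence in distribution of random variables with values in a topological space. -/
def TendstoInDistribution {F : Type*} [TopologicalSpace F]
    (P : Measure Ω) (P' : Measure Ω') (Yn : ℕ → Ω → F) (Y : Ω' → F) : Prop :=
  ∀ φ : F → ℝ, Continuous φ → (∃ C, ∀ z, |φ z| ≤ C) →
    Tendsto (fun n => ∫ ω, φ (Yn n ω) ∂P) atTop (nhds (∫ ω, φ (Y ω) ∂P'))

/-- Uniform convergence on compacts in probability, to a deterministic path. -/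
def TendstoUCP (P : Measure Ω) (Yn : ℕ → Ω → ℝ → E) (c : ℝ → E) : Prop :=
  ∀ ε : ℝ, 0 < ε → ∀ N : ℕ,
    Tendsto (fun n => P {ω | ε < ⨆ t : Set.Icc (0:ℝ) (N:ℝ), ‖Yn n ω t - c t‖}) atTop (nhds 0)

/-- First exit time of a path from the centered ball of radius `r`. -/
def exitTime (r : ℝ) (y : ℝ → E) : ℝ :=
  sInf {t | 0 ≤ t ∧ r ≤ ⨆ s : Set.Icc (0:ℝ) t, ‖y s‖}

/-- Right limit `τ^{r+}` of the exit time in the radius. -/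
def exitTimeRight (r : ℝ) (y : ℝ → E) : ℝ :=
  ⨅ u : Set.Ioi r, exitTime (u : ℝ) y

/-- First time the path `y` is at distance exactly `r` from `x`. -/
def hitTime (y : ℝ → E) (x : E) (r : ℝ) : ℝ :=
  sInf {s | 0 ≤ s ∧ ‖y s - x‖ = r}

/-- Standard `d`-dimensional Brownian motion. -/
def IsStandardBM (d : ℕ) (P : Measure Ω) (W : Ω → ℝ → EuclideanSpace ℝ (Fin d)) : Prop :=
  IsProbabilityMeasure P ∧
  (∀ ω, W ω 0 = 0) ∧
  (∀ᵐ ω ∂P, Continuous (W ω)) ∧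
  (∀ t : ℝ, Measurable fun ω => W ω t) ∧
  (∀ (m : ℕ) (t : Fin (m+1) → ℝ), (∀ i, 0 ≤ t i) → Monotone t →
    iIndepFun
      (fun (p : Fin m × Fin d) ω => W ω (t p.1.succ) p.2 - W ω (t p.1.castSucc) p.2) P) ∧
  (∀ s t : ℝ, 0 ≤ s → s ≤ t → ∀ i : Fin d,
    P.map (fun ω => W ω t i - W ω s i) = gaussianReal 0 (Real.toNNReal (t - s)))

/-- Standard one-dimensional Brownian motion. -/
def IsStandardBM1 (P : Measure Ω) (W : Ω → ℝ → ℝ) : Prop :=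
  IsProbabilityMeasure P ∧
  (∀ ω, W ω 0 = 0) ∧
  (∀ᵐ ω ∂P, Continuous (W ω)) ∧
  (∀ t : ℝ, Measurable fun ω => W ω t) ∧
  (∀ (m : ℕ) (t : Fin (m+1) → ℝ), (∀ i, 0 ≤ t i) → Monotone t →
    iIndepFun
      (fun (i : Fin m) ω => W ω (t i.succ) - W ω (t i.castSucc)) P) ∧
  (∀ s t : ℝ, 0 ≤ s → s ≤ t →
    P.map (fun ω => W ω t - W ω s) = gaussianReal 0 (Real.toNNReal (t - s)))

/-- Action of a `d×d` matrix on a point of Euclidean space. -/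
def matVec {d : ℕ} (A : Matrix (Fin d) (Fin d) ℝ) (v : EuclideanSpace ℝ (Fin d)) :
    EuclideanSpace ℝ (Fin d) := WithLp.toLp 2 (fun i => ∑ j, A i j * v j)

/-- A local martingale: there are stopping times increasing to infinity reducing it. -/
def IsLocalMartingale {mΩ : MeasurableSpace Ω} (P : Measure Ω)
    (ℱ : Filtration ℝ mΩ) (M : ℝ → Ω → ℝ) : Prop :=
  ∃ τ : ℕ → Ω → ℝ, (∀ k, IsStoppingTime ℱ (fun ω => (τ k ω : WithTop ℝ))) ∧
    (∀ᵐ ω ∂P, Tendsto (fun k => τ k ω) atTop atTop) ∧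
    (∀ k, Martingale (MeasureTheory.stoppedProcess M (fun ω => (τ k ω : WithTop ℝ))) ℱ P)

variable {d : ℕ}

/-- The generator of the diffusion with drift `b` and volatility `σ`:
`Lg = b·∇g + (1/2)Tr(σ' H_g σ)`. -/
def generator (b : EuclideanSpace ℝ (Fin d) → EuclideanSpace ℝ (Fin d))
    (σ : EuclideanSpace ℝ (Fin d) → Matrix (Fin d) (Fin d) ℝ)
    (g : EuclideanSpace ℝ (Fin d) → ℝ) (y : EuclideanSpace ℝ (Fin d)) : ℝ :=
  inner (𝕜 := ℝ) (b y) (gradient g y) +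
    (1/2) * ∑ i, ∑ j, (σ y * (σ y)ᵀ) i j *
      iteratedFDeriv ℝ 2 g y ![EuclideanSpace.single i 1, EuclideanSpace.single j 1]

/-- `X` is a (non-explosive, continuous, adapted) solution of the SDE
`dX = b(X)dt + σ(X)dW`, `X_0 = x`, formulated through the martingale problem:
for every `C²` function `g`, `g(X_t) - g(x) - ∫_0^t Lg(X_s) ds` is a local martingale. -/
def IsSDESolution {mΩ : MeasurableSpace Ω} (P : Measure Ω) (ℱ : Filtration ℝ mΩ)
    (b : EuclideanSpace ℝ (Fin d) → EuclideanSpace ℝ (Fin d))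
    (σ : EuclideanSpace ℝ (Fin d) → Matrix (Fin d) (Fin d) ℝ)
    (x : EuclideanSpace ℝ (Fin d)) (X : Ω → ℝ → EuclideanSpace ℝ (Fin d)) : Prop :=
  IsProbabilityMeasure P ∧
  (∀ ω, X ω 0 = x) ∧
  (∀ᵐ ω ∂P, Continuous (X ω)) ∧
  Adapted ℱ (fun t ω => X ω t) ∧
  ∀ g : EuclideanSpace ℝ (Fin d) → ℝ, ContDiff ℝ 2 g →
    IsLocalMartingale P ℱ
      (fun t ω => g (X ω t) - g x - ∫ s in Set.Ioc (0:ℝ) t, generator b σ g (X ω s))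

/-- Local Lipschitz and linear growth conditions on the coefficients. -/
def GoodCoefficients (b : EuclideanSpace ℝ (Fin d) → EuclideanSpace ℝ (Fin d))
    (σ : EuclideanSpace ℝ (Fin d) → Matrix (Fin d) (Fin d) ℝ) : Prop :=
  LocallyLipschitz b ∧ (∀ i j, LocallyLipschitz fun y => σ y i j) ∧
  (∃ C, ∀ y, ‖b y‖ ≤ C * (1 + ‖y‖)) ∧ (∃ C, ∀ y i j, |σ y i j| ≤ C * (1 + ‖y‖))

/-- Diffusivity Assumption: `inf_{‖y-x‖≤1} (σσ')_{k,k}(y) > 0` for some `k`. -/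
def DiffusiveAt (σ : EuclideanSpace ℝ (Fin d) → Matrix (Fin d) (Fin d) ℝ)
    (x : EuclideanSpace ℝ (Fin d)) : Prop :=
  ∃ k : Fin d, ∃ c : ℝ, 0 < c ∧ ∀ y, ‖y - x‖ ≤ 1 → c ≤ (σ y * (σ y)ᵀ) k k

/-- `τ̃^n(X)(ω)`: first time `X` is at distance `n^{-1/2}` from `x`. -/
def tauTilde (X : Ω → ℝ → EuclideanSpace ℝ (Fin d)) (x : EuclideanSpace ℝ (Fin d))
    (n : ℕ) (ω : Ω) : ℝ :=
  hitTime (X ω) x (1 / Real.sqrt n)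

/-- The path `t ↦ σ(x) W_t(ω)`. -/
def sigW (σx : Matrix (Fin d) (Fin d) ℝ) (W : Ω → ℝ → EuclideanSpace ℝ (Fin d)) (ω : Ω) :
    ℝ → EuclideanSpace ℝ (Fin d) := fun t => matVec σx (W ω t)

/-- The limit random variable `σ(x)W_{τ^1(σ(x)W)}`. -/
def sigWExit (σx : Matrix (Fin d) (Fin d) ℝ) (W : Ω → ℝ → EuclideanSpace ℝ (Fin d)) (ω : Ω) :
    EuclideanSpace ℝ (Fin d) := sigW σx W ω (exitTime 1 (sigW σx W ω))

section Statement1Aux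

lemma exitTime_nonneg (r : ℝ) (y : ℝ → E) : 0 ≤ exitTime r y :=
  Real.sInf_nonneg fun _ hx => hx.1

lemma bddAbove_norm_path {y : ℝ → E} (hy : Continuous y) (t' : ℝ) :
    BddAbove (Set.range fun s : Set.Icc (0:ℝ) t' => ‖y s‖) := by
  have h : (Set.range fun s : Set.Icc (0:ℝ) t' => ‖y s‖) = (fun u => ‖y u‖) '' Set.Icc 0 t' := by
    ext v
    simp [Set.mem_image]
  rw [h]
  exact (isCompact_Icc.bddAbove_image hy.norm.continuousOn)

lemma lemA {y : ℝ → E} (hy : Continuous y) {r : ℝ}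
    (h : exitTime r y < exitTimeRight r y) :
    ∃ q1 q2 : ℚ, 0 < (q1:ℝ) ∧ (q1:ℝ) < (q2:ℝ) ∧
      ∀ t : ℝ, (q1:ℝ) ≤ t → t ≤ (q2:ℝ) → (⨆ s : Set.Icc (0:ℝ) t, ‖y s‖) = r := by
  set M : ℝ → ℝ := fun t => ⨆ s : Set.Icc (0:ℝ) t, ‖y s‖ with hM
  have hτ0 : 0 ≤ exitTime r y := exitTime_nonneg r y
  have hbb : BddBelow (Set.range fun u : Set.Ioi r => exitTime (u:ℝ) y) :=
    ⟨0, by rintro x ⟨u, rfl⟩; exact exitTime_nonneg _ y⟩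
  have hSr : {t | 0 ≤ t ∧ r ≤ M t}.Nonempty := by
    by_contra hne
    rw [Set.not_nonempty_iff_eq_empty] at hne
    have h0 : ∀ u : Set.Ioi r, exitTime (u:ℝ) y = 0 := by
      intro u
      have hsub : {t | 0 ≤ t ∧ (u:ℝ) ≤ M t} = ∅ := by
        rw [← Set.subset_empty_iff, ← hne]
        exact fun t ht => ⟨ht.1, le_trans (le_of_lt u.2) ht.2⟩
      rw [exitTime]
      rw [show {t | 0 ≤ t ∧ (u:ℝ) ≤ ⨆ s : Set.Icc (0:ℝ) t, ‖y s‖} = ∅ from hsub]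
      exact Real.sInf_empty
    have hzero : exitTimeRight r y = 0 := by
      rw [exitTimeRight]
      simp only [h0]
      exact ciInf_const
    rw [hzero] at h
    linarith
  obtain ⟨q1, hq1a, hq1b⟩ := exists_rat_btwn h
  obtain ⟨q2, hq2a, hq2b⟩ := exists_rat_btwn hq1b
  refine ⟨q1, q2, lt_of_le_of_lt hτ0 hq1a, hq2a, ?_⟩
  intro t ht1 ht2
  have ht0 : 0 < t := lt_of_lt_of_le (lt_of_le_of_lt hτ0 hq1a) ht1
  have hmono : ∀ a b : ℝ, 0 ≤ a → a ≤ b → M a ≤ M b := by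
    intro a b ha hab
    haveI : Nonempty (Set.Icc (0:ℝ) a) := ⟨⟨0, le_refl 0, ha⟩⟩
    apply ciSup_le
    rintro ⟨u, hu⟩
    exact le_ciSup (bddAbove_norm_path hy b) (⟨u, hu.1, hu.2.trans hab⟩ : Set.Icc (0:ℝ) b)
  have hge : r ≤ M t := by
    obtain ⟨sr, hsr, hlt⟩ := exists_lt_of_csInf_lt hSr
      (show sInf {t | 0 ≤ t ∧ r ≤ M t} < t from lt_of_lt_of_le hq1a ht1)
    exact hsr.2.trans (hmono _ _ hsr.1 hlt.le)
  have hle : M t ≤ r := by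
    by_contra hcon
    push_neg at hcon
    have h1 : t < exitTime (M t) y := by
      calc t ≤ (q2:ℝ) := ht2
        _ < exitTimeRight r y := hq2b
        _ ≤ exitTime (M t) y := ciInf_le hbb (⟨M t, hcon⟩ : Set.Ioi r)
    have h2 : exitTime (M t) y ≤ t :=
      csInf_le ⟨0, fun x hx => hx.1⟩ ⟨ht0.le, le_refl (M t)⟩
    linarith
  exact le_antisymm hle hge


variable {P : Measure Ω} {W : Ω → ℝ → EuclideanSpace ℝ (Fin d)}

lemma measW_coord (hmeas : ∀ t : ℝ, Measurable fun ω => W ω t) (t : ℝ) (j : Fin d) :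
    Measurable fun ω => W ω t j :=
  (measurable_pi_apply j).comp ((WithLp.measurable_ofLp 2 _).comp (hmeas t))

lemma continuous_matVec {d : ℕ} (S : Matrix (Fin d) (Fin d) ℝ) :
    Continuous fun v : EuclideanSpace ℝ (Fin d) => matVec S v := by
  apply (PiLp.continuous_toLp 2 _).comp
  apply continuous_pi
  intro i
  exact continuous_finset_sum _ fun j _ => (continuous_const.mul ((continuous_apply j).comp (PiLp.continuous_ofLp 2 _)))

lemma jointLaw (hW : IsStandardBM d P W) (m : ℕ) (T : Fin (m+1) → ℝ)
    (h0 : ∀ i, 0 ≤ T i) (hm : Monotone T) :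
    Measure.map (fun ω (p : Fin m × Fin d) => W ω (T p.1.succ) p.2 - W ω (T p.1.castSucc) p.2) P
      = Measure.pi (fun p => gaussianReal 0 (Real.toNNReal (T p.1.succ - T p.1.castSucc))) := by
  obtain ⟨hP, hW0, hcont, hmeas, hindep, hmarg⟩ := hW
  have hVp : ∀ p : Fin m × Fin d,
      Measurable fun ω => W ω (T p.1.succ) p.2 - W ω (T p.1.castSucc) p.2 :=
    fun p => (measW_coord hmeas _ _).sub (measW_coord hmeas _ _)
  have hV : Measurable fun ω (p : Fin m × Fin d) =>
      W ω (T p.1.succ) p.2 - W ω (T p.1.castSucc) p.2 :=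
    measurable_pi_lambda _ hVp
  symm
  apply Measure.pi_eq
  intro sets hsets
  rw [Measure.map_apply hV (MeasurableSet.univ_pi hsets)]
  have hpre : (fun ω (p : Fin m × Fin d) => W ω (T p.1.succ) p.2 - W ω (T p.1.castSucc) p.2)
        ⁻¹' Set.pi Set.univ sets
      = ⋂ p ∈ Finset.univ,
          (fun ω => W ω (T p.1.succ) p.2 - W ω (T p.1.castSucc) p.2) ⁻¹' sets p := by
    ext ω; simp [Set.mem_pi]
  rw [hpre, (hindep m T h0 hm).measure_inter_preimage_eq_mul Finset.univ (fun p _ => hsets p)]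
  refine Finset.prod_congr rfl fun p _ => ?_
  rw [← hmarg (T p.1.castSucc) (T p.1.succ) (h0 _) (hm (Fin.castSucc_le_succ p.1)) p.2,
    Measure.map_apply (hVp p) (hsets p)]

lemma piScale {ι : Type*} [Fintype ι] (c : ℝ) (vs : ι → NNReal) :
    Measure.map (fun (v : ι → ℝ) (p : ι) => c * v p)
        (Measure.pi fun p => gaussianReal 0 (vs p))
      = Measure.pi (fun p => gaussianReal 0 (⟨c^2, sq_nonneg c⟩ * vs p)) := by
  symm
  apply Measure.pi_eq
  intro sets hsets
  have hmeasf : Measurable fun (v : ι → ℝ) (p : ι) => c * v p :=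
    measurable_pi_lambda _ fun p => by fun_prop
  rw [Measure.map_apply hmeasf (MeasurableSet.univ_pi hsets)]
  have hpre : (fun (v : ι → ℝ) (p : ι) => c * v p) ⁻¹' Set.pi Set.univ sets
      = Set.pi Set.univ (fun p => (fun x => c * x) ⁻¹' sets p) := by
    ext v; simp [Set.mem_pi]
  rw [hpre, Measure.pi_pi]
  refine Finset.prod_congr rfl fun p _ => ?_
  have := gaussianReal_map_const_mul (μ := 0) (v := vs p) c
  rw [mul_zero] at this
  exact (Measure.map_apply (measurable_const_mul c) (hsets p)).symm.trans
    (congrArg (fun μ => μ (sets p)) this)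


def pSum {d : ℕ} (m : ℕ) (g : Fin m × Fin d → ℝ) (i : Fin (m+1)) : EuclideanSpace ℝ (Fin d) :=
  WithLp.toLp 2 (fun j => ∑ k : Fin m, if (k:ℕ) < (i:ℕ) then g (k, j) else 0)

lemma telescope (hW0 : ∀ ω, W ω 0 = 0) (m : ℕ) (T : Fin (m+1) → ℝ) (hT0 : T 0 = 0)
    (ω : Ω) (i : Fin (m+1)) :
    W ω (T i) = pSum m (fun p => W ω (T p.1.succ) p.2 - W ω (T p.1.castSucc) p.2) i := by
  set g : Fin m × Fin d → ℝ := fun p => W ω (T p.1.succ) p.2 - W ω (T p.1.castSucc) p.2 with hg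
  induction i using Fin.induction with
  | zero =>
    rw [hT0, hW0]
    ext j
    simp [pSum]
  | succ i ih =>
    ext j
    have ihj := congrFun (congrArg WithLp.ofLp ih) j
    have key : ∀ k : Fin m,
        (if (k:ℕ) < ((i.succ : Fin (m+1)):ℕ) then g (k, j) else 0)
          = (if (k:ℕ) < ((i.castSucc : Fin (m+1)):ℕ) then g (k, j) else 0)
            + (if k = i then g (k, j) else 0) := by
      intro k
      rw [Fin.val_succ, Fin.coe_castSucc]
      rcases lt_trichotomy ((k:ℕ)) ((i:ℕ)) with hlt|heq|hgt
      · rw [if_pos (by omega), if_pos hlt, if_neg (by intro he; subst he; omega), add_zero]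
      · have hk : k = i := Fin.ext heq
        subst hk
        rw [if_pos (by omega), if_neg (by omega), if_pos rfl, zero_add]
      · rw [if_neg (by omega), if_neg (by omega), if_neg (by intro he; subst he; omega), add_zero]
    show W ω (T i.succ) j = ∑ k : Fin m, if (k:ℕ) < ((i.succ : Fin (m+1)):ℕ) then g (k, j) else 0
    rw [Finset.sum_congr rfl fun k _ => key k, Finset.sum_add_distrib]
    have h2 : (∑ k : Fin m, if k = i then g (k, j) else 0) = g (i, j) := by simp
    have h3 : (∑ k : Fin m, if (k:ℕ) < ((i.castSucc : Fin (m+1)):ℕ) then g (k, j) else 0)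
        = W ω (T i.castSucc) j := ihj.symm
    rw [h2, h3]
    show W ω (T i.succ) j = W ω (T i.castSucc) j + (W ω (T i.succ) j - W ω (T i.castSucc) j)
    ring

variable (S : Matrix (Fin d) (Fin d) ℝ)

lemma measV (hmeas : ∀ t : ℝ, Measurable fun ω => W ω t) (m : ℕ) (T : Fin (m+1) → ℝ) :
    Measurable fun ω (p : Fin m × Fin d) => W ω (T p.1.succ) p.2 - W ω (T p.1.castSucc) p.2 :=
  measurable_pi_lambda _ fun p => (measW_coord hmeas _ _).sub (measW_coord hmeas _ _)

lemma eventEq (hW0 : ∀ ω, W ω 0 = 0) (m : ℕ) (T : Fin (m+1) → ℝ) (hT0 : T 0 = 0) (x : ℝ) :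
    {ω | ∀ i : Fin (m+1), ‖matVec S (W ω (T i))‖ ≤ x}
      = (fun ω (p : Fin m × Fin d) => W ω (T p.1.succ) p.2 - W ω (T p.1.castSucc) p.2) ⁻¹'
        {g | ∀ i, ‖matVec S (pSum m g i)‖ ≤ x} := by
  ext ω
  have ht := telescope hW0 m T hT0 ω
  simp only [Set.mem_setOf_eq, Set.mem_preimage]
  constructor
  · intro h i
    rw [← ht i]
    exact h i
  · intro h i
    rw [ht i]
    exact h i

lemma measB (m : ℕ) (x : ℝ) :
    MeasurableSet {g : Fin m × Fin d → ℝ | ∀ i, ‖matVec S (pSum m g i)‖ ≤ x} := by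
  have h : {g : Fin m × Fin d → ℝ | ∀ i, ‖matVec S (pSum m g i)‖ ≤ x}
      = ⋂ i, (fun g : Fin m × Fin d → ℝ => ‖matVec S (pSum m g i)‖) ⁻¹' Set.Iic x := by
    ext gg; simp
  rw [h]
  refine MeasurableSet.iInter fun i => ?_
  have hc : Continuous fun g : Fin m × Fin d → ℝ => pSum m g i := by
    apply (PiLp.continuous_toLp 2 _).comp
    apply continuous_pi
    intro j
    apply continuous_finset_sum
    intro k _
    by_cases hk : (k:ℕ) < (i:ℕ)
    · simp only [pSum, if_pos hk]
      exact continuous_apply (k, j)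
    · simp only [pSum, if_neg hk]
      exact continuous_const
  exact (continuous_norm.comp ((continuous_matVec S).comp hc)).measurable measurableSet_Iic

lemma finiteScale (hW : IsStandardBM d P W) (m : ℕ) (T : Fin (m+1) → ℝ)
    (h0 : ∀ i, 0 ≤ T i) (hm : Monotone T) (hT0 : T 0 = 0)
    (lam x : ℝ) (hlam : 0 < lam) :
    P {ω | ∀ i, ‖matVec S (W ω (lam * T i))‖ ≤ Real.sqrt lam * x}
      = P {ω | ∀ i, ‖matVec S (W ω (T i))‖ ≤ x} := by
  obtain ⟨hP, hW0, hcont, hmeas, hindep, hmarg⟩ := hW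
  have hWbm : IsStandardBM d P W := ⟨hP, hW0, hcont, hmeas, hindep, hmarg⟩
  set c := Real.sqrt lam with hcdef
  have hc : 0 < c := Real.sqrt_pos.mpr hlam
  set B : Set (Fin m × Fin d → ℝ) := {g | ∀ i, ‖matVec S (pSum m g i)‖ ≤ x} with hB
  set Bl : Set (Fin m × Fin d → ℝ) := {g | ∀ i, ‖matVec S (pSum m g i)‖ ≤ c * x} with hBldef
  have hR : P {ω | ∀ i, ‖matVec S (W ω (T i))‖ ≤ x}
      = Measure.pi (fun p : Fin m × Fin d =>
          gaussianReal 0 (Real.toNNReal (T p.1.succ - T p.1.castSucc))) B := by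
    rw [eventEq S hW0 m T hT0 x, ← Measure.map_apply (measV hmeas m T) (measB S m x),
      jointLaw hWbm m T h0 hm]
  have hmono' : Monotone (fun i => lam * T i) :=
    fun a b hab => mul_le_mul_of_nonneg_left (hm hab) hlam.le
  have h0' : ∀ i, 0 ≤ lam * T i := fun i => mul_nonneg hlam.le (h0 i)
  have hT0' : lam * T 0 = 0 := by rw [hT0, mul_zero]
  have hL : P {ω | ∀ i, ‖matVec S (W ω (lam * T i))‖ ≤ c * x}
      = Measure.pi (fun p : Fin m × Fin d =>
          gaussianReal 0 (Real.toNNReal (lam * T p.1.succ - lam * T p.1.castSucc))) Bl := by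
    rw [eventEq S hW0 m (fun i => lam * T i) hT0' (c * x),
      ← Measure.map_apply (measV hmeas m (fun i => lam * T i)) (measB S m (c * x)),
      jointLaw hWbm m (fun i => lam * T i) h0' hmono']
  have hcsq : c^2 = lam := Real.sq_sqrt hlam.le
  have hpi : (fun p : Fin m × Fin d =>
        gaussianReal 0 (Real.toNNReal (lam * T p.1.succ - lam * T p.1.castSucc)))
      = fun p => gaussianReal 0 (Real.toNNReal lam *
          Real.toNNReal (T p.1.succ - T p.1.castSucc)) := by
    funext p
    rw [← mul_sub, Real.toNNReal_mul hlam.le]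
  have hcl : (⟨c^2, sq_nonneg c⟩ : NNReal) = Real.toNNReal lam := by
    apply NNReal.coe_injective
    rw [Real.coe_toNNReal lam hlam.le]
    exact hcsq
  have hps := piScale c (fun p : Fin m × Fin d => Real.toNNReal (T p.1.succ - T p.1.castSucc))
  rw [hcl] at hps
  have hscalemeas : Measurable fun (v : Fin m × Fin d → ℝ) p => c * v p :=
    measurable_pi_lambda _ fun p => by fun_prop
  have hBl : (fun (v : Fin m × Fin d → ℝ) p => c * v p) ⁻¹' Bl = B := by
    ext g
    simp only [Set.mem_preimage, hB, hBldef, Set.mem_setOf_eq]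
    have hps' : ∀ i, pSum m (fun p => c * g p) i = c • pSum m g i := by
      intro i
      ext j
      show (∑ k : Fin m, if (k:ℕ) < (i:ℕ) then c * g (k, j) else 0)
        = c * ∑ k : Fin m, if (k:ℕ) < (i:ℕ) then g (k, j) else 0
      rw [Finset.mul_sum]
      exact Finset.sum_congr rfl fun k _ => by rw [mul_ite, mul_zero]
    have hmv : ∀ v : EuclideanSpace ℝ (Fin d), matVec S (c • v) = c • matVec S v := by
      intro v
      ext j
      show (∑ k, S j k * (c * v k)) = c * ∑ k, S j k * v k
      rw [Finset.mul_sum]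
      exact Finset.sum_congr rfl fun k _ => by ring
    constructor
    · intro h i
      have h' := h i
      rw [hps' i, hmv, norm_smul, Real.norm_eq_abs, abs_of_pos hc] at h'
      exact le_of_mul_le_mul_left h' hc
    · intro h i
      rw [hps' i, hmv, norm_smul, Real.norm_eq_abs, abs_of_pos hc]
      exact mul_le_mul_of_nonneg_left (h i) hc.le
  rw [hL, hpi, ← hps, Measure.map_apply hscalemeas (measB S m (c * x)), hBl, hR]


/-! ### Part D -/

def sQ (n : ℕ) : ℚ := min 1 (max 0 ((Denumerable.eqv ℚ).symm n))

def sR (n : ℕ) : ℝ := (sQ n : ℝ)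

lemma sR_mem (n : ℕ) : sR n ∈ Set.Icc (0:ℝ) 1 := by
  constructor
  · rw [sR]
    exact_mod_cast le_min (by norm_num) (le_max_left _ _)
  · rw [sR]
    exact_mod_cast min_le_left _ _

lemma sQ_surj {q : ℚ} (h0 : 0 ≤ q) (h1 : q ≤ 1) : ∃ n, sQ n = q :=
  ⟨Denumerable.eqv ℚ q, by rw [sQ, Equiv.symm_apply_apply, max_eq_right h0, min_eq_right h1]⟩

lemma exists_site {t u ε : ℝ} (ht : 0 < t) (hu0 : 0 ≤ u) (hut : u ≤ t) (hε : 0 < ε) :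
    ∃ n, |t * sR n - u| < ε := by
  have hdiv : (u - ε)/t < u/t := by
    rw [div_lt_div_iff₀ ht ht]
    exact mul_lt_mul_of_pos_right (sub_lt_self u hε) ht
  obtain ⟨q, hq1, hq2⟩ := exists_rat_btwn hdiv
  have hq2' : (q:ℝ) < 1 ∨ (q:ℝ) ≤ 1 := Or.inr (le_trans hq2.le ((div_le_one ht).mpr hut))
  have hqle1 : q ≤ 1 := by exact_mod_cast le_trans hq2.le ((div_le_one ht).mpr hut)
  set q' : ℚ := max 0 q with hq'def
  have hq'0 : (0:ℚ) ≤ q' := le_max_left _ _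
  have hq'1 : q' ≤ 1 := max_le (by norm_num) hqle1
  obtain ⟨n, hn⟩ := sQ_surj hq'0 hq'1
  refine ⟨n, ?_⟩
  have hsn : sR n = (q' : ℝ) := by rw [sR, hn]
  rw [hsn]
  have hqt1 : u - ε < (q:ℝ) * t := by
    rw [div_lt_iff₀ ht] at hq1
    exact hq1
  have hqt2 : (q:ℝ) * t < u := by
    rw [lt_div_iff₀ ht] at hq2
    exact hq2
  by_cases hq0 : (0:ℚ) ≤ q
  · have hq'q : q' = q := max_eq_right hq0
    rw [hq'q, abs_lt]
    constructor
    · nlinarith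
    · nlinarith
  · push_neg at hq0
    have hq'q : q' = 0 := max_eq_left hq0.le
    have hqtneg : (q:ℝ) * t < 0 :=
      mul_neg_of_neg_of_pos (by exact_mod_cast hq0) ht
    rw [hq'q]
    push_cast
    rw [mul_zero, zero_sub, abs_neg, abs_of_nonneg hu0]
    nlinarith

def EvS (W : Ω → ℝ → EuclideanSpace ℝ (Fin d)) (S : Matrix (Fin d) (Fin d) ℝ)
    (t x : ℝ) (n : ℕ) : Set Ω := {ω | ‖matVec S (W ω (t * sR n))‖ ≤ x}

def AA (W : Ω → ℝ → EuclideanSpace ℝ (Fin d)) (S : Matrix (Fin d) (Fin d) ℝ)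
    (t x : ℝ) : Set Ω := ⋂ n, EvS W S t x n

lemma measEvS (hmeas : ∀ t : ℝ, Measurable fun ω => W ω t) (t x : ℝ) (n : ℕ) :
    MeasurableSet (EvS W S t x n) :=
  measurableSet_le (((continuous_matVec S).measurable.comp (hmeas _)).norm) measurable_const

lemma measAA (hmeas : ∀ t : ℝ, Measurable fun ω => W ω t) (t x : ℝ) :
    MeasurableSet (AA W S t x) :=
  MeasurableSet.iInter fun n => measEvS S hmeas t x n

lemma AA_mono (t : ℝ) {x x' : ℝ} (h : x ≤ x') : AA W S t x ⊆ AA W S t x' := by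
  intro ω hω
  rw [AA, Set.mem_iInter] at hω ⊢
  exact fun n => le_trans (hω n) h

lemma tendsto_phi (hP : IsProbabilityMeasure P) (hmeas : ∀ t : ℝ, Measurable fun ω => W ω t)
    (t x : ℝ) :
    Tendsto (fun N => P (⋂ n ∈ Finset.range N, EvS W S t x n)) atTop (nhds (P (AA W S t x))) := by
  have h1 : ⋂ N, ⋂ n ∈ Finset.range N, EvS W S t x n = AA W S t x := by
    ext ω
    simp only [Set.mem_iInter, Finset.mem_range, AA]
    exact ⟨fun h n => h (n+1) n (by omega), fun h N n _ => h n⟩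
  rw [← h1]
  have := tendsto_measure_iInter_atTop (μ := P)
    (s := fun N => ⋂ n ∈ Finset.range N, EvS W S t x n)
    (fun N => (MeasurableSet.biInter (Set.to_countable _)
      (fun n _ => measEvS S hmeas t x n)).nullMeasurableSet)
    (fun a b hab => by
      intro ω hω
      simp only [Set.mem_iInter, Finset.mem_range] at hω ⊢
      exact fun n hn => hω n (lt_of_lt_of_le hn hab))
    ⟨0, measure_ne_top P _⟩
  exact this

lemma exists_sigma (N : ℕ) :
    ∃ (m : ℕ) (σ : Fin (m+1) → ℝ), (∀ i, 0 ≤ σ i) ∧ Monotone σ ∧ σ 0 = 0 ∧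
      (∀ i, σ i = 0 ∨ ∃ n < N, σ i = sR n) ∧ (∀ n < N, ∃ i, σ i = sR n) := by
  classical
  set F : Finset ℝ := insert 0 ((Finset.range N).image sR) with hF
  have hFnonneg : ∀ z ∈ F, 0 ≤ z := by
    intro z hz
    rcases Finset.mem_insert.mp hz with h | h
    · rw [h]
    · obtain ⟨n, _, rfl⟩ := Finset.mem_image.mp h
      exact (sR_mem n).1
  have hcard : F.card = (F.card - 1) + 1 :=
    (Nat.succ_pred_eq_of_pos (Finset.card_pos.mpr ⟨0, Finset.mem_insert_self 0 _⟩)).symm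
  set e := F.orderIsoOfFin hcard with he
  refine ⟨F.card - 1, fun i => (e i : ℝ), fun i => hFnonneg _ (e i).2, ?_, ?_, ?_, ?_⟩
  · intro a b hab
    exact Subtype.coe_le_coe.mpr (e.monotone hab)
  · obtain ⟨i0, hi0⟩ := e.surjective ⟨0, Finset.mem_insert_self 0 _⟩
    have hle : (e 0 : ℝ) ≤ (e i0 : ℝ) := Subtype.coe_le_coe.mpr (e.monotone (Fin.zero_le i0))
    have : (e i0 : ℝ) = 0 := by rw [hi0]
    exact le_antisymm (this ▸ hle) (hFnonneg _ (e 0).2)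
  · intro i
    have := (e i).2
    rcases Finset.mem_insert.mp this with h | h
    · exact Or.inl h
    · obtain ⟨n, hn, hsn⟩ := Finset.mem_image.mp h
      exact Or.inr ⟨n, Finset.mem_range.mp hn, hsn.symm⟩
  · intro n hn
    have hmem : sR n ∈ F :=
      Finset.mem_insert_of_mem (Finset.mem_image_of_mem _ (Finset.mem_range.mpr hn))
    obtain ⟨i, hi⟩ := e.surjective ⟨sR n, hmem⟩
    exact ⟨i, by show ((e i : {x // x ∈ F}) : ℝ) = sR n; rw [hi]⟩

lemma matVec_zero : matVec S (0 : EuclideanSpace ℝ (Fin d)) = 0 := by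
  ext j
  show (∑ k, S j k * (0:ℝ)) = 0
  simp

lemma finiteEventEq (hW0 : ∀ ω, W ω 0 = 0) (N : ℕ) {m : ℕ} {σ : Fin (m+1) → ℝ}
    (hσ : (∀ i, σ i = 0 ∨ ∃ n < N, σ i = sR n) ∧ (∀ n < N, ∃ i, σ i = sR n))
    (t x : ℝ) (hx : 0 ≤ x) :
    (⋂ n ∈ Finset.range N, EvS W S t x n) = {ω | ∀ i, ‖matVec S (W ω (t * σ i))‖ ≤ x} := by
  ext ω
  simp only [Set.mem_iInter, Finset.mem_range, Set.mem_setOf_eq, EvS]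
  constructor
  · intro h i
    rcases hσ.1 i with h0 | ⟨n, hn, hsn⟩
    · rw [h0, mul_zero, hW0, matVec_zero, norm_zero]
      exact hx
    · rw [hsn]
      exact h n hn
  · intro h n hn
    obtain ⟨i, hi⟩ := hσ.2 n hn
    rw [← hi]
    exact h i

lemma phiScale (hW : IsStandardBM d P W) (q t x : ℝ) (hq : 0 < q) (ht : 0 < t) (hx : 0 ≤ x) :
    P (AA W S t x) = P (AA W S q (x * Real.sqrt (q / t))) := by
  obtain ⟨hP, hW0, hcont, hmeas, hindep, hmarg⟩ := hW
  have hWbm : IsStandardBM d P W := ⟨hP, hW0, hcont, hmeas, hindep, hmarg⟩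
  set lam := t / q with hlam
  have hlampos : 0 < lam := div_pos ht hq
  set x' := x * Real.sqrt (q / t) with hx'
  have hx'0 : 0 ≤ x' := mul_nonneg hx (Real.sqrt_nonneg _)
  have hsl : Real.sqrt lam * x' = x := by
    rw [hx', hlam]
    rw [show Real.sqrt (t/q) * (x * Real.sqrt (q/t)) = x * (Real.sqrt (t/q) * Real.sqrt (q/t))
      from by ring]
    rw [← Real.sqrt_mul (by positivity)]
    rw [show t/q * (q/t) = 1 from by field_simp]
    rw [Real.sqrt_one, mul_one]
  have key : ∀ N : ℕ, P (⋂ n ∈ Finset.range N, EvS W S t x n)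
      = P (⋂ n ∈ Finset.range N, EvS W S q x' n) := by
    intro N
    obtain ⟨m, σ, h0σ, hmonoσ, hzeroσ, hmem1, hmem2⟩ := exists_sigma N
    rw [finiteEventEq S hW0 N ⟨hmem1, hmem2⟩ t x hx,
        finiteEventEq S hW0 N ⟨hmem1, hmem2⟩ q x' hx'0]
    have hT0 : q * σ 0 = 0 := by rw [hzeroσ, mul_zero]
    have hTmono : Monotone (fun i => q * σ i) :=
      fun a b hab => mul_le_mul_of_nonneg_left (hmonoσ hab) hq.le
    have hTnn : ∀ i, 0 ≤ q * σ i := fun i => mul_nonneg hq.le (h0σ i)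
    have hfs := finiteScale S hWbm m (fun i => q * σ i) hTnn hTmono hT0 lam x' hlampos
    have hfs' : P {ω | ∀ i : Fin (m+1), ‖matVec S (W ω (lam * (q * σ i)))‖ ≤ Real.sqrt lam * x'}
        = P {ω | ∀ i : Fin (m+1), ‖matVec S (W ω (q * σ i))‖ ≤ x'} := hfs
    have harg : ∀ i : Fin (m+1), lam * (q * σ i) = t * σ i := by
      intro i
      rw [hlam]
      field_simp
    have hset : {ω | ∀ i : Fin (m+1), ‖matVec S (W ω (lam * (q * σ i)))‖ ≤ Real.sqrt lam * x'}
        = {ω | ∀ i : Fin (m+1), ‖matVec S (W ω (t * σ i))‖ ≤ x} := by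
      rw [hsl]
      ext ω
      simp only [Set.mem_setOf_eq]
      exact forall_congr' fun i => by rw [harg i]
    rw [← hset, hfs']
  have l1 := tendsto_phi S hP hmeas t x
  have l2 := tendsto_phi S hP hmeas q x'
  rw [show (fun N => P (⋂ n ∈ Finset.range N, EvS W S t x n))
      = (fun N => P (⋂ n ∈ Finset.range N, EvS W S q x' n)) from funext key] at l1
  exact tendsto_nhds_unique l1 l2


lemma keyPair (hW : IsStandardBM d P W) (r q1 q2 : ℝ) (hr : 0 < r) (h1 : 0 < q1)
    (h12 : q1 < q2) :
    ∃ t, q1 ≤ t ∧ t ≤ q2 ∧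
      P ({ω | Continuous (W ω)} ∩
        {ω | (⨆ s : Set.Icc (0:ℝ) t, ‖matVec S (W ω s)‖) = r}) = 0 := by
  obtain ⟨hP, hW0, hcont, hmeas, hindep, hmarg⟩ := hW
  have hWbm : IsStandardBM d P W := ⟨hP, hW0, hcont, hmeas, hindep, hmarg⟩
  set H : ℝ → ℝ := fun xx => (P (AA W S q1 xx)).toReal with hH
  have hHmono : Monotone H := fun a b hab =>
    ENNReal.toReal_mono (measure_ne_top P _) (measure_mono (AA_mono S q1 hab))
  have hctble := hHmono.countable_not_continuousAt
  set a := r * Real.sqrt (q1 / q2) with ha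
  have hq12 : q1 / q2 < 1 := (div_lt_one (by linarith)).mpr h12
  have hapos : 0 < a := mul_pos hr (Real.sqrt_pos.mpr (div_pos h1 (by linarith)))
  have har : a < r := by
    have h2 : Real.sqrt (q1/q2) < 1 := by
      rw [show (1:ℝ) = Real.sqrt 1 from (Real.sqrt_one).symm]
      exact Real.sqrt_lt_sqrt (div_nonneg h1.le (le_of_lt (lt_trans h1 h12))) hq12
    nlinarith
  have hy : ∃ y0, y0 ∈ Set.Icc a r ∧ ContinuousAt H y0 := by
    by_contra hcon
    push_neg at hcon
    have hsub : Set.Icc a r ⊆ {x | ¬ContinuousAt H x} := fun y hy => hcon y hy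
    have hv : volume (Set.Icc a r) = 0 :=
      le_antisymm (le_trans (measure_mono hsub) (Set.Countable.measure_zero hctble _).le)
        (zero_le)
    rw [Real.volume_Icc, ENNReal.ofReal_eq_zero] at hv
    linarith
  obtain ⟨y0, ⟨hy0a, hy0r⟩, hy0c⟩ := hy
  have hy0pos : 0 < y0 := lt_of_lt_of_le hapos hy0a
  set t := q1 * r^2 / y0^2 with htdef
  have ht0 : 0 < t := by positivity
  have htge : q1 ≤ t := by
    rw [htdef, le_div_iff₀ (by positivity)]
    have hsq : y0^2 ≤ r^2 := pow_le_pow_left₀ hy0pos.le hy0r 2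
    exact mul_le_mul_of_nonneg_left hsq h1.le
  have htle : t ≤ q2 := by
    rw [htdef, div_le_iff₀ (by positivity)]
    have ha2 : a^2 ≤ y0^2 := pow_le_pow_left₀ hapos.le hy0a 2
    have ha2' : a^2 = r^2 * (q1/q2) := by
      rw [ha, mul_pow, Real.sq_sqrt (div_nonneg h1.le (le_of_lt (lt_trans h1 h12)))]
    rw [ha2'] at ha2
    have hq2pos : (0:ℝ) < q2 := by linarith
    calc q1 * r^2 = (r^2 * (q1/q2)) * q2 := by field_simp
      _ ≤ y0^2 * q2 := mul_le_mul_of_nonneg_right ha2 hq2pos.le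
      _ = q2 * y0^2 := by ring
  have hqt : q1 / t = (y0 / r)^2 := by
    rw [htdef]
    field_simp
  have hsqt : Real.sqrt (q1 / t) = y0 / r := by
    rw [hqt, Real.sqrt_sq (by positivity)]
  have hry : r * Real.sqrt (q1/t) = y0 := by
    rw [hsqt]
    field_simp
  refine ⟨t, htge, htle, ?_⟩
  set Tgt := {ω | Continuous (W ω)} ∩
    {ω | (⨆ s : Set.Icc (0:ℝ) t, ‖matVec S (W ω s)‖) = r} with hTgt
  have hcontain : ∀ x', 0 ≤ x' → x' < r → Tgt ⊆ AA W S t r \ AA W S t x' := by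
    intro x' hx'0 hx'r ω hω
    obtain ⟨hωc, hωs⟩ := hω
    have hωs : (⨆ s : Set.Icc (0:ℝ) t, ‖matVec S (W ω s)‖) = r := hωs
    have hyc : Continuous fun u => matVec S (W ω u) := (continuous_matVec S).comp hωc
    constructor
    · rw [AA, Set.mem_iInter]
      intro n
      show ‖matVec S (W ω (t * sR n))‖ ≤ r
      rw [← hωs]
      exact le_ciSup (bddAbove_norm_path hyc t)
        (⟨t * sR n, ⟨mul_nonneg ht0.le (sR_mem n).1,
          mul_le_of_le_one_right ht0.le (sR_mem n).2⟩⟩ : Set.Icc (0:ℝ) t)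
    · intro hmem
      rw [AA, Set.mem_iInter] at hmem
      have hexu : ∃ u : Set.Icc (0:ℝ) t, x' < ‖matVec S (W ω u)‖ := by
        by_contra hconu
        push_neg at hconu
        haveI : Nonempty (Set.Icc (0:ℝ) t) := ⟨⟨0, le_refl 0, ht0.le⟩⟩
        have hcs := ciSup_le hconu
        rw [hωs] at hcs
        linarith
      obtain ⟨⟨u, hu0, hut⟩, hxu⟩ := hexu
      have hxu : x' < ‖matVec S (W ω u)‖ := hxu
      have hcu : ContinuousAt (fun v => ‖matVec S (W ω v)‖) u := hyc.norm.continuousAt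
      rw [Metric.continuousAt_iff] at hcu
      obtain ⟨δ, hδ0, hδ⟩ := hcu (‖matVec S (W ω u)‖ - x') (by linarith)
      obtain ⟨n, hn⟩ := exists_site ht0 hu0 hut hδ0
      have h2 := hδ (show dist (t * sR n) u < δ from by rwa [Real.dist_eq])
      rw [Real.dist_eq, abs_sub_lt_iff] at h2
      have h4 : ‖matVec S (W ω (t * sR n))‖ ≤ x' := hmem n
      have h3 : x' < ‖matVec S (W ω (t * sR n))‖ := by linarith [h2.2]
      exact absurd h4 (not_le.mpr h3)
  set xk : ℕ → ℝ := fun k => r - r / (k+2) with hxk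
  have hxk0 : ∀ k, 0 ≤ xk k := by
    intro k
    have hle : r / ((k:ℝ)+2) ≤ r := div_le_self hr.le (by have := Nat.cast_nonneg (α := ℝ) k; linarith)
    simp only [hxk]
    linarith
  have hxkr : ∀ k, xk k < r := by
    intro k
    have hpos : 0 < r / ((k:ℝ)+2) := by positivity
    simp only [hxk]
    linarith
  have hrk : Tendsto (fun k : ℕ => r / ((k:ℝ)+2)) atTop (nhds 0) := by
    apply Tendsto.div_atTop tendsto_const_nhds
    exact Filter.tendsto_atTop_add_const_right atTop 2 tendsto_natCast_atTop_atTop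
  have hxktend : Tendsto xk atTop (nhds r) := by
    rw [show r = r - 0 from (sub_zero r).symm]
    exact tendsto_const_nhds.sub hrk
  have hdiff : ∀ k, P Tgt ≤ ENNReal.ofReal (H y0 - H (xk k * Real.sqrt (q1/t))) := by
    intro k
    have hPle : P Tgt ≤ P (AA W S t r \ AA W S t (xk k)) :=
      measure_mono (hcontain (xk k) (hxk0 k) (hxkr k))
    rw [measure_diff (AA_mono S t (hxkr k).le) (measAA S hmeas t (xk k)).nullMeasurableSet
      (measure_ne_top P _)] at hPle
    have e1 : P (AA W S t r) = P (AA W S q1 (r * Real.sqrt (q1/t))) :=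
      phiScale S hWbm q1 t r h1 ht0 hr.le
    have e2 : P (AA W S t (xk k)) = P (AA W S q1 (xk k * Real.sqrt (q1/t))) :=
      phiScale S hWbm q1 t (xk k) h1 ht0 (hxk0 k)
    rw [e1, e2, hry] at hPle
    have f1 : P (AA W S q1 y0) = ENNReal.ofReal (H y0) :=
      (ENNReal.ofReal_toReal (measure_ne_top P _)).symm
    have f2 : P (AA W S q1 (xk k * Real.sqrt (q1/t)))
        = ENNReal.ofReal (H (xk k * Real.sqrt (q1/t))) :=
      (ENNReal.ofReal_toReal (measure_ne_top P _)).symm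
    rw [f1, f2, ← ENNReal.ofReal_sub _ ENNReal.toReal_nonneg] at hPle
    exact hPle
  have hzk : Tendsto (fun k => xk k * Real.sqrt (q1/t)) atTop (nhds y0) := by
    rw [← hry]
    exact hxktend.mul_const _
  have hHz : Tendsto (fun k => H (xk k * Real.sqrt (q1/t))) atTop (nhds (H y0)) :=
    hy0c.tendsto.comp hzk
  have hlim : Tendsto (fun k => ENNReal.ofReal (H y0 - H (xk k * Real.sqrt (q1/t)))) atTop
      (nhds 0) := by
    have hsub : Tendsto (fun k => H y0 - H (xk k * Real.sqrt (q1/t))) atTop (nhds 0) := by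
      rw [show (0:ℝ) = H y0 - H y0 from (sub_self _).symm]
      exact tendsto_const_nhds.sub hHz
    rw [show (0:ENNReal) = ENNReal.ofReal 0 from ENNReal.ofReal_zero.symm]
    exact (ENNReal.continuous_ofReal.tendsto 0).comp hsub
  have hfin : P Tgt ≤ 0 := ge_of_tendsto' hlim hdiff
  exact le_antisymm hfin (zero_le)


end Statement1Aux

/-- a.s. continuity in `r` of the exit times of `ΣW`:
`P(τ^r(ΣW) < τ^{r+}(ΣW)) = 0`. -/
theorem exitTime_right_continuous_of_BM
    {d : ℕ} {Ω : Type*} [MeasurableSpace Ω] (P : Measure Ω)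
    (W : Ω → ℝ → EuclideanSpace ℝ (Fin d)) (hW : IsStandardBM d P W)
    (S : Matrix (Fin d) (Fin d) ℝ) (hS : ∃ k, 0 < (S * Sᵀ) k k)
    (r : ℝ) (hr : 0 < r) :
    P {ω | exitTime r (sigW S W ω) < exitTimeRight r (sigW S W ω)} = 0 := by
  classical
  obtain ⟨hP, hW0, hcontae, hmeas, hindep, hmarg⟩ := hW
  have hWbm : IsStandardBM d P W := ⟨hP, hW0, hcontae, hmeas, hindep, hmarg⟩
  have hkey : ∀ p : ℚ × ℚ, ∃ t : ℝ,
      (0 < ((p.1:ℝ)) ∧ ((p.1:ℝ)) < ((p.2:ℝ))) →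
        (((p.1:ℝ)) ≤ t ∧ t ≤ ((p.2:ℝ)) ∧
          P ({ω | Continuous (W ω)} ∩
            {ω | (⨆ s : Set.Icc (0:ℝ) t, ‖matVec S (W ω s)‖) = r}) = 0) := by
    intro p
    by_cases h : 0 < ((p.1:ℝ)) ∧ ((p.1:ℝ)) < ((p.2:ℝ))
    · obtain ⟨t, h1, h2, h3⟩ := keyPair S hWbm r p.1 p.2 hr h.1 h.2
      exact ⟨t, fun _ => ⟨h1, h2, h3⟩⟩
    · exact ⟨0, fun hc => absurd hc h⟩
  choose tp htp using hkey
  set NS : ℚ × ℚ → Set Ω := fun p =>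
    if 0 < ((p.1:ℝ)) ∧ ((p.1:ℝ)) < ((p.2:ℝ)) then
      {ω | Continuous (W ω)} ∩
        {ω | (⨆ s : Set.Icc (0:ℝ) (tp p), ‖matVec S (W ω s)‖) = r}
    else ∅ with hNS
  have hNSnull : ∀ p, P (NS p) = 0 := by
    intro p
    rw [hNS]
    by_cases h : 0 < ((p.1:ℝ)) ∧ ((p.1:ℝ)) < ((p.2:ℝ))
    · simp only [if_pos h]
      exact (htp p h).2.2
    · simp only [if_neg h]
      exact measure_empty
  have hsub : {ω | exitTime r (sigW S W ω) < exitTimeRight r (sigW S W ω)}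
      ⊆ {ω | ¬Continuous (W ω)} ∪ ⋃ p : ℚ × ℚ, NS p := by
    intro ω hω
    by_cases hc : Continuous (W ω)
    · right
      have hyc : Continuous (sigW S W ω) := (continuous_matVec S).comp hc
      obtain ⟨q1, q2, hq1, hq12, hall⟩ := lemA hyc hω
      rw [Set.mem_iUnion]
      refine ⟨(q1, q2), ?_⟩
      rw [hNS]
      simp only [if_pos (⟨hq1, hq12⟩ : 0 < ((q1:ℝ)) ∧ ((q1:ℝ)) < ((q2:ℝ)))]
      have hint := htp (q1, q2) ⟨hq1, hq12⟩
      exact ⟨hc, hall (tp (q1,q2)) hint.1 hint.2.1⟩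
    · left
      exact hc
  have hN0 : P {ω | ¬Continuous (W ω)} = 0 := hcontae
  refine le_antisymm ?_ (zero_le)
  calc P {ω | exitTime r (sigW S W ω) < exitTimeRight r (sigW S W ω)}
      ≤ P ({ω | ¬Continuous (W ω)} ∪ ⋃ p : ℚ × ℚ, NS p) := measure_mono hsub
    _ ≤ P {ω | ¬Continuous (W ω)} + P (⋃ p : ℚ × ℚ, NS p) := measure_union_le _ _
    _ = 0 := by rw [hN0, measure_iUnion_null hNSnull, add_zero]
end Counterexample
end
end

section
/- Let f ∈ C²(ℝ^d; ℝ^ℓ), X solve the SDE dX_t = μ(X_t)dt + σ(X_t)dW_t with X_0 = x under the diffusivity assumption, and τ̃^n(X) = inf{s : ‖X_s − x‖ = n^{-1/2}}. Define X̃^n_t := n^{1/2}[(f(X_{τ̃^n(X)∧t}) − f(x)) − J_f(x)(X_{τ̃^n(X)∧t} − x)]. Then X̃^n → 0 uniformly on compact sets in probability as n → ∞. -/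
open Filter MeasureTheory ProbabilityTheory Matrix

noncomputable section

namespace Counterexample

variable {E : Type*} [NormedAddCommGroup E]

variable {Ω Ω' : Type*} [MeasurableSpace Ω] [MeasurableSpace Ω']

variable {d : ℕ}

/-- Before the hitting time of radius `r`, a continuous path started at `x`
stays within distance `r` of `x`. -/
lemma norm_le_of_le_hitTime {y : ℝ → E} (hy : Continuous y) {x : E} (h0 : y 0 = x)
    {r : ℝ} (hr : 0 ≤ r) {s : ℝ} (hs0 : 0 ≤ s) (hs : s ≤ hitTime y x r) :
    ‖y s - x‖ ≤ r := by
  by_contra h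
  push_neg at h
  have hg : Continuous fun u => ‖y u - x‖ := (hy.sub continuous_const).norm
  have hmem : r ∈ Set.Icc (‖y 0 - x‖) (‖y s - x‖) := by
    constructor
    · simp [h0, hr]
    · exact h.le
  obtain ⟨v, hv, hvr⟩ := intermediate_value_Icc hs0 hg.continuousOn hmem
  have hvS : v ∈ {u : ℝ | 0 ≤ u ∧ ‖y u - x‖ = r} := ⟨hv.1, hvr⟩
  have hbdd : BddBelow {u : ℝ | 0 ≤ u ∧ ‖y u - x‖ = r} :=
    ⟨0, fun u hu => hu.1⟩
  have hle : hitTime y x r ≤ v := csInf_le hbdd hvS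
  have hvs : v = s := le_antisymm hv.2 (hs.trans hle)
  rw [hvs] at hvr
  exact absurd hvr (ne_of_gt h)

lemma tauTilde_nonneg {d : ℕ} {Ω : Type*} (X : Ω → ℝ → EuclideanSpace ℝ (Fin d))
    (x : EuclideanSpace ℝ (Fin d)) (n : ℕ) (ω : Ω) : 0 ≤ tauTilde X x n ω := by
  apply Real.sInf_nonneg
  intro u hu
  exact hu.1

/-- Proposition 3.5: the scaled stopped processes
`X̃^n = n^{1/2}[(f(X_{τ̃^n ∧ ·}) − f(x)) − J_f(x)(X_{τ̃^n ∧ ·} − x)]` vanish u.c.p. -/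
theorem jacobian_remainder_tendstoUCP_zero
    {d l : ℕ} {Ω Ω' : Type*} {mΩ : MeasurableSpace Ω} [MeasurableSpace Ω']
    (P : Measure Ω) (ℱ : Filtration ℝ mΩ)
    (b : EuclideanSpace ℝ (Fin d) → EuclideanSpace ℝ (Fin d))
    (σ : EuclideanSpace ℝ (Fin d) → Matrix (Fin d) (Fin d) ℝ)
    (hbσ : GoodCoefficients b σ)
    (x : EuclideanSpace ℝ (Fin d)) (X : Ω → ℝ → EuclideanSpace ℝ (Fin d))
    (hX : IsSDESolution P ℱ b σ x X)
    (hdiff : DiffusiveAt σ x)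
    (P' : Measure Ω') (W' : Ω' → ℝ → EuclideanSpace ℝ (Fin d))
    (hW' : IsStandardBM d P' W')
    (f : EuclideanSpace ℝ (Fin d) → EuclideanSpace ℝ (Fin l)) (hf : ContDiff ℝ 2 f) :
    TendstoUCP P
      (fun n ω t =>
        Real.sqrt n •
          ((f (X ω (min (tauTilde X x n ω) t)) - f x) -
            fderiv ℝ f x (X ω (min (tauTilde X x n ω) t) - x)))
      0 := by
  intro ε hε N
  have hc : (0:ℝ) < ε/2 := by linarith
  -- null set of discontinuous paths
  have hnull : P {ω | ¬ Continuous (X ω)} = 0 := by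
    have h := hX.2.2.1
    rwa [MeasureTheory.ae_iff] at h
  -- first-order Taylor bound from the derivative
  have hdf : HasFDerivAt f (fderiv ℝ f x) x :=
    ((hf.differentiable two_ne_zero) x).hasFDerivAt
  have hlo := hdf.isLittleO
  have hev := (hlo.def hc)
  rw [Metric.eventually_nhds_iff] at hev
  obtain ⟨δ, hδ, hball⟩ := hev
  -- eventually 1/√n < δ and 1 ≤ n
  have hev2 : ∀ᶠ n : ℕ in atTop, 1 / Real.sqrt n < δ ∧ 1 ≤ n := by
    have h1 : ∀ᶠ n : ℕ in atTop, (1/δ)^2 < (n:ℝ) :=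
      tendsto_natCast_atTop_atTop.eventually (eventually_gt_atTop ((1/δ)^2))
    filter_upwards [h1, eventually_ge_atTop 1] with n hn hn1
    refine ⟨?_, hn1⟩
    have hδ' : (0:ℝ) < 1/δ := by positivity
    have hlt : 1/δ < Real.sqrt n := by
      rw [show (1/δ : ℝ) = Real.sqrt ((1/δ)^2) from (Real.sqrt_sq hδ'.le).symm]
      exact Real.sqrt_lt_sqrt (by positivity) hn
    calc 1 / Real.sqrt n < 1 / (1/δ) := one_div_lt_one_div_of_lt hδ' hlt
      _ = δ := one_div_one_div δ
  have key : ∀ᶠ n : ℕ in atTop,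
      P {ω | ε < ⨆ t : Set.Icc (0:ℝ) (N:ℝ),
        ‖Real.sqrt n •
          ((f (X ω (min (tauTilde X x n ω) t)) - f x) -
            fderiv ℝ f x (X ω (min (tauTilde X x n ω) t) - x)) -
          (0 : ℝ → EuclideanSpace ℝ (Fin l)) t‖} = 0 := by
    filter_upwards [hev2] with n hn
    obtain ⟨hn1, hn2⟩ := hn
    have hsn : 0 < Real.sqrt n := Real.sqrt_pos.2 (by exact_mod_cast hn2)
    have hsub : {ω | ε < ⨆ t : Set.Icc (0:ℝ) (N:ℝ),
        ‖Real.sqrt n •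
          ((f (X ω (min (tauTilde X x n ω) t)) - f x) -
            fderiv ℝ f x (X ω (min (tauTilde X x n ω) t) - x)) -
          (0 : ℝ → EuclideanSpace ℝ (Fin l)) t‖} ⊆ {ω | ¬ Continuous (X ω)} := by
      intro ω hω
      simp only [Set.mem_setOf_eq] at hω ⊢
      intro hcont
      have hbound : ∀ t : Set.Icc (0:ℝ) (N:ℝ),
          ‖Real.sqrt n •
            ((f (X ω (min (tauTilde X x n ω) t)) - f x) -
              fderiv ℝ f x (X ω (min (tauTilde X x n ω) t) - x)) -
            (0 : ℝ → EuclideanSpace ℝ (Fin l)) t‖ ≤ ε/2 := by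
        intro t
        set s := min (tauTilde X x n ω) (t : ℝ) with hsdef
        have hs0 : 0 ≤ s := le_min (tauTilde_nonneg X x n ω) t.2.1
        have hdist : ‖X ω s - x‖ ≤ 1 / Real.sqrt n :=
          norm_le_of_le_hitTime hcont (hX.2.1 ω)
            (by positivity) hs0 (min_le_left _ _)
        have hlt : dist (X ω s) x < δ := by
          rw [dist_eq_norm]; exact lt_of_le_of_lt hdist hn1
        have htay := hball hlt
        have hnorm : ‖Real.sqrt n •
            ((f (X ω s) - f x) - fderiv ℝ f x (X ω s - x)) -
            (0 : ℝ → EuclideanSpace ℝ (Fin l)) t‖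
            = Real.sqrt n * ‖(f (X ω s) - f x) - fderiv ℝ f x (X ω s - x)‖ := by
          simp [norm_smul, Real.norm_eq_abs, abs_of_nonneg hsn.le]
        rw [hnorm]
        have h2 : ‖f (X ω s) - f x - fderiv ℝ f x (X ω s - x)‖
            ≤ ε/2 * (1 / Real.sqrt n) := by
          calc ‖f (X ω s) - f x - fderiv ℝ f x (X ω s - x)‖
              ≤ ε/2 * ‖X ω s - x‖ := htay
            _ ≤ ε/2 * (1 / Real.sqrt n) := by
                exact mul_le_mul_of_nonneg_left hdist hc.le
        calc Real.sqrt n * ‖f (X ω s) - f x - fderiv ℝ f x (X ω s - x)‖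
            ≤ Real.sqrt n * (ε/2 * (1 / Real.sqrt n)) :=
              mul_le_mul_of_nonneg_left h2 hsn.le
          _ = ε/2 := by field_simp
      have hsup : (⨆ t : Set.Icc (0:ℝ) (N:ℝ),
          ‖Real.sqrt n •
            ((f (X ω (min (tauTilde X x n ω) t)) - f x) -
              fderiv ℝ f x (X ω (min (tauTilde X x n ω) t) - x)) -
            (0 : ℝ → EuclideanSpace ℝ (Fin l)) t‖) ≤ ε/2 :=
        Real.iSup_le hbound hc.le
      linarith
    exact le_antisymm (hnull ▸ measure_mono hsub) zero_le
  exact tendsto_const_nhds.congr' (key.mono fun n h => h.symm)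
end Counterexample
end
end
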